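/- Let G = BS(m,n) be the Baumslag–Solitar group with 0 < m ≤ |n|, let d = gcd(m,n), and let μ, ν be positive integers with 1 ≤ μ, ν ≤ d, gcd(μ,ν) = 1 and μ·ν = d. Then [t^{-k} a^μ t^k, a^ν] ∈ [γ_ω(G), G] for all k ∈ ℤ. -/

import Mathlib

def BSRels (m n : ℤ) : Set (FreeGroup (Fin 2)) :=
  {(FreeGroup.of 0)⁻¹ * (FreeGroup.of 1) ^ m * FreeGroup.of 0 * ((FreeGroup.of 1) ^ n)⁻¹}

/-- The Baumslag–Solitar group `BS(m,n) = ⟨t, a ∣ t⁻¹ aᵐ t = aⁿ⟩`. -/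
abbrev BS (m n : ℤ) : Type := PresentedGroup (BSRels m n)

/-- The generator `t` of `BS(m,n)`. -/
def BS.t (m n : ℤ) : BS m n := PresentedGroup.of 0

/-- The generator `a` of `BS(m,n)`. -/
def BS.a (m n : ℤ) : BS m n := PresentedGroup.of 1

/-- `γ_ω(G)`: the intersection of all terms of the lower central series
(`lowerCentralSeries G c` is `γ_{c+1}(G)`). -/
def lcsOmega (G : Type*) [Group G] : Subgroup G := ⨅ c : ℕ, (⊤ : Subgroup G).lowerCentralSeries c

/-- The commutator `[x,y] = x⁻¹y⁻¹xy`. -/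
def commElt {G : Type*} [Group G] (x y : G) : G := x⁻¹ * y⁻¹ * x * y

/-!
Write `z s = [t^(-s) a^μ t^s, a^ν]` and `m = μν m'`, `n = μν n'` with `m', n'` coprime. Modulo
a normal subgroup `H` containing every `[z s, g]` the `z s` are central, so commutators are
bilinear in them, and the defining relation yields `z s ^ (μ m') = z (s+1) ^ (μ n')`,
`z s ^ (ν n') = z (s+1) ^ (ν m')` and `z 0 = 1`. These recurrences force `z s = 1`. If `m', n'`
are units, `z s ^ μ = 1` and `z s ^ ν = 1` propagate along `s` from `z 0 = 1`. Otherwise every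
`z s` has exponent dividing `μν (m'² - n'²)`, and for each prime `p` one of the two recurrences
has a coefficient prime to `p`, which kills the `p`-part of `z s`, either by propagating
`z 0 = 1` along `s` or by descending on the `p`-power exponent. Hence `z s ∈ H`; taking
`H = γ_{c+1}` inductively puts `z s` in `γ_ω`, and then `H = [γ_ω, G]` gives the theorem.
-/

open scoped commutatorElement

section

variable {G : Type*} [Group G]

lemma commElt_eq_commutatorElement (x y : G) : commElt x y = ⁅x⁻¹, y⁻¹⁆ := by
  rw [commutatorElement_def, commElt]
  group

lemma map_commElt {K : Type*} [Group K] (f : G →* K) (x y : G) :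
    f (commElt x y) = commElt (f x) (f y) := by
  simp only [commElt, map_mul, map_inv]

lemma commElt_eq_one_of_commute {x y : G} (h : Commute x y) : commElt x y = 1 := by
  rw [commElt_eq_commutatorElement, commutatorElement_eq_one_iff_commute]
  exact h.inv_inv

lemma commElt_zpow_right {x y : G} (hc : ∀ g, Commute (commElt x y) g) (w : ℤ) :
    commElt x (y ^ w) = commElt x y ^ w := by
  have hconj : x⁻¹ * y⁻¹ * x⁻¹⁻¹ = commElt x y * y⁻¹ := by rw [commElt]; group
  calc commElt x (y ^ w) = (x⁻¹ * y⁻¹ * x⁻¹⁻¹) ^ w * y ^ w := by rw [conj_zpow, commElt]; group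
    _ = commElt x y ^ w := by rw [hconj, (hc y⁻¹).mul_zpow]; group

lemma commElt_zpow_left {x y : G} (hc : ∀ g, Commute (commElt x y) g) (r : ℤ) :
    commElt (x ^ r) y = commElt x y ^ r := by
  have hconj : y⁻¹ * x * y⁻¹⁻¹ = x * commElt x y := by rw [commElt]; group
  calc commElt (x ^ r) y = (x ^ r)⁻¹ * (y⁻¹ * x * y⁻¹⁻¹) ^ r := by rw [conj_zpow, commElt]; group
    _ = commElt x y ^ r := by rw [hconj, ((hc x).symm).mul_zpow, inv_mul_cancel_left]

end

section

variable {G : Type*} [Group G]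

lemma eq_one_of_zpow_eq_one_of_isCoprime {x : G} {a b : ℤ} (h : IsCoprime a b)
    (ha : x ^ a = 1) (hb : x ^ b = 1) : x = 1 := by
  obtain ⟨u, v, huv⟩ := h
  calc x = (x ^ a) ^ u * (x ^ b) ^ v := by
        rw [← zpow_mul, ← zpow_mul, ← zpow_add, mul_comm a, mul_comm b, huv, zpow_one]
    _ = 1 := by rw [ha, hb, one_zpow, one_zpow, one_mul]

lemma eq_one_of_pow_ordCompl_eq_one {x : G} {n : ℕ} (hn : n ≠ 0)
    (h : ∀ p, p.Prime → x ^ ordCompl[p] n = 1) : x = 1 := by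
  rw [← orderOf_eq_one_iff]
  by_contra hne
  obtain ⟨p, hp, hpx⟩ := Nat.exists_prime_and_dvd hne
  exact Nat.not_dvd_ordCompl hp hn (hpx.trans (orderOf_dvd_of_pow_eq_one (h p hp)))

def PowRecurrence (w : ℤ → G) (α β : ℤ) : Prop := ∀ s, w s ^ α = w (s + 1) ^ β

variable {w : ℤ → G} {α β : ℤ}

lemma powRecurrence_zpow_iff {k : ℤ} :
    PowRecurrence (fun s => w s ^ k) α β ↔ PowRecurrence w (k * α) (k * β) := by
  simp only [PowRecurrence, zpow_mul]

namespace PowRecurrence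

lemma zpow (hw : PowRecurrence w α β) (k : ℤ) : PowRecurrence (fun s => w s ^ k) α β :=
  fun s => by dsimp only; rw [← zpow_mul, mul_comm, zpow_mul, hw s, ← zpow_mul, mul_comm, zpow_mul]

lemma reflect (hw : PowRecurrence w α β) : PowRecurrence (fun s => w (-s)) β α :=
  fun s => by dsimp only; rw [hw, neg_add, neg_add_cancel_right]

lemma forall_eq_one_of_isCoprime (hw : PowRecurrence w α β) {N : ℤ} (hα : IsCoprime α N)
    (hβ : IsCoprime β N) (htors : ∀ s, w s ^ N = 1) (h0 : w 0 = 1) (s : ℤ) : w s = 1 := by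
  have hstep : ∀ i, w i = 1 ↔ w (i + 1) = 1 := fun i =>
    ⟨fun h => eq_one_of_zpow_eq_one_of_isCoprime hβ (by rw [← hw, h, one_zpow]) (htors _),
      fun h => eq_one_of_zpow_eq_one_of_isCoprime hα (by rw [hw, h, one_zpow]) (htors _)⟩
  induction s using Int.induction_on with
  | zero => exact h0
  | succ i ih => exact (hstep i).1 ih
  | pred i ih => exact (hstep _).2 (by rwa [sub_add_cancel])

lemma forall_eq_one_of_prime_dvd (hw : PowRecurrence w α β) {p : ℤ} (hp : Prime p)
    (hα : p ∣ α) (hβ : ¬ p ∣ β) {v : ℕ} (htors : ∀ s, w s ^ p ^ v = 1) (s : ℤ) : w s = 1 := by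
  induction v generalizing w s with
  | zero => simpa using htors s
  | succ v ih =>
    have hp_tors : ∀ s, w s ^ p = 1 :=
      ih (hw.zpow p) fun s => by rw [← zpow_mul, ← pow_succ']; exact htors s
    have hβ_tors : w s ^ β = 1 := by
      obtain ⟨c, hc⟩ := hα
      rw [← sub_add_cancel s 1, ← hw, hc, zpow_mul, hp_tors, one_zpow]
    exact eq_one_of_zpow_eq_one_of_isCoprime (hp.coprime_iff_not_dvd.2 hβ).symm hβ_tors (hp_tors s)

lemma forall_eq_one_of_prime (hw : PowRecurrence w α β) {p : ℤ} (hp : Prime p)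
    (hαβ : ¬ (p ∣ α ∧ p ∣ β)) {v : ℕ} (htors : ∀ s, w s ^ p ^ v = 1) (h0 : w 0 = 1) (s : ℤ) :
    w s = 1 := by
  by_cases hpα : p ∣ α
  · exact hw.forall_eq_one_of_prime_dvd hp hpα (fun hpβ => hαβ ⟨hpα, hpβ⟩) htors s
  by_cases hpβ : p ∣ β
  · simpa using hw.reflect.forall_eq_one_of_prime_dvd hp hpβ hpα (fun s => htors (-s)) (-s)
  exact hw.forall_eq_one_of_isCoprime (hp.coprime_iff_not_dvd.2 hpα).pow_left.symm
    (hp.coprime_iff_not_dvd.2 hpβ).pow_left.symm htors h0 s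

end PowRecurrence

end

section

variable {G : Type*} [Group G] {w : ℤ → G} {μ ν m' n' : ℤ}

lemma zpow_eq_one_of_powRecurrence (hA : PowRecurrence w (μ * m') (μ * n'))
    (hB : PowRecurrence w (ν * n') (ν * m')) (s : ℤ) :
    w s ^ (μ * ν * (m' ^ 2 - n' ^ 2)) = 1 := by
  have hm : w (s + 1) ^ ((μ * n') * (ν * m')) = w s ^ (μ * ν * m' ^ 2) := by
    rw [zpow_mul, ← hA s, ← zpow_mul]
    congr 1
    ring
  have hn : w (s + 1) ^ ((μ * n') * (ν * m')) = w s ^ (μ * ν * n' ^ 2) := by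
    rw [mul_comm, zpow_mul, ← hB s, ← zpow_mul]
    congr 1
    ring
  rw [mul_sub, zpow_sub, ← hm, ← hn, mul_inv_cancel]

lemma Prime.not_dvd_mul_and_dvd_mul {p k a b : ℤ} (hp : Prime p) (hk : ¬ p ∣ k)
    (hab : IsCoprime a b) : ¬ (p ∣ k * a ∧ p ∣ k * b) := fun ⟨ha, hb⟩ =>
  hp.not_isUnit (hab.isUnit_of_dvd' ((hp.dvd_or_dvd ha).resolve_left hk)
    ((hp.dvd_or_dvd hb).resolve_left hk))

lemma forall_eq_one_of_powRecurrence_of_sq_eq_sq (hμν : IsCoprime μ ν) (hmn : IsCoprime m' n')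
    (hA : PowRecurrence w (μ * m') (μ * n')) (hB : PowRecurrence w (ν * n') (ν * m'))
    (h0 : w 0 = 1) (hsq : m' ^ 2 = n' ^ 2) (s : ℤ) : w s = 1 := by
  have hm' : IsUnit m' := hmn.pow_right.isUnit_of_dvd' dvd_rfl ⟨m', by rw [← hsq]; ring⟩
  have hn' : IsUnit n' := hmn.symm.pow_right.isUnit_of_dvd' dvd_rfl ⟨n', by rw [hsq]; ring⟩
  refine eq_one_of_zpow_eq_one_of_isCoprime hμν ?_ ?_
  · exact (powRecurrence_zpow_iff.2 hA).forall_eq_one_of_isCoprime (isCoprime_zero_right.2 hm')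
      (isCoprime_zero_right.2 hn') (fun _ => zpow_zero _) (by rw [h0, one_zpow]) s
  · exact (powRecurrence_zpow_iff.2 hB).forall_eq_one_of_isCoprime (isCoprime_zero_right.2 hn')
      (isCoprime_zero_right.2 hm') (fun _ => zpow_zero _) (by rw [h0, one_zpow]) s

lemma forall_eq_one_of_powRecurrence (hμ : μ ≠ 0) (hν : ν ≠ 0) (hμν : IsCoprime μ ν)
    (hmn : IsCoprime m' n') (hA : PowRecurrence w (μ * m') (μ * n'))
    (hB : PowRecurrence w (ν * n') (ν * m')) (h0 : w 0 = 1) (s : ℤ) : w s = 1 := by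
  by_cases hsq : m' ^ 2 = n' ^ 2
  · exact forall_eq_one_of_powRecurrence_of_sq_eq_sq hμν hmn hA hB h0 hsq s
  set D := μ * ν * (m' ^ 2 - n' ^ 2)
  have hD : D.natAbs ≠ 0 := Int.natAbs_ne_zero.2 (by simp [D, hμ, hν, sub_eq_zero, hsq])
  refine eq_one_of_pow_ordCompl_eq_one hD fun p hp => ?_
  have hpZ : Prime (p : ℤ) := Nat.prime_iff_prime_int.1 hp
  have hDtors : ∀ s, w s ^ (D.natAbs : ℤ) = 1 := fun s => by
    rcases abs_choice D with h | h <;> rw [Int.natCast_natAbs, h]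
    · exact zpow_eq_one_of_powRecurrence hA hB s
    · rw [zpow_neg, zpow_eq_one_of_powRecurrence hA hB s, inv_one]
  set q := ordCompl[p] D.natAbs
  have htors : ∀ s, (w s ^ (q : ℤ)) ^ (p : ℤ) ^ D.natAbs.factorization p = 1 := fun s => by
    rw [← zpow_mul, ← hDtors s, mul_comm]
    exact_mod_cast congrArg (w s ^ ·) (Nat.ordProj_mul_ordCompl_eq_self D.natAbs p)
  have hq0 : w 0 ^ (q : ℤ) = 1 := by rw [h0, one_zpow]
  have hq : w s ^ (q : ℤ) = 1 := by
    by_cases hpμ : (p : ℤ) ∣ μ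
    · have hpν : ¬ (p : ℤ) ∣ ν := fun hpν => hpZ.not_isUnit (hμν.isUnit_of_dvd' hpμ hpν)
      exact (hB.zpow q).forall_eq_one_of_prime hpZ (hpZ.not_dvd_mul_and_dvd_mul hpν hmn.symm)
        htors hq0 s
    · exact (hA.zpow q).forall_eq_one_of_prime hpZ (hpZ.not_dvd_mul_and_dvd_mul hpμ hmn)
        htors hq0 s
  rwa [zpow_natCast] at hq

end

section

variable {K : Type*} [Group K] (t a : K) (μ ν : ℤ)

def conjComm (s : ℤ) : K := commElt (t ^ (-s) * a ^ μ * t ^ s) (a ^ ν)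

lemma conj_zpow_zpow (x : K) (s k : ℤ) : (t ^ (-s) * x * t ^ s) ^ k = t ^ (-s) * x ^ k * t ^ s := by
  rw [← inv_inv (t ^ s), ← zpow_neg, conj_zpow]

lemma conjComm_zero : conjComm t a μ ν 0 = 1 := by
  simpa [conjComm] using commElt_eq_one_of_commute ((Commute.refl a).zpow_zpow μ ν)

variable {t a μ ν} {m' n' : ℤ}

lemma commElt_conj_eq_conjComm (hc : ∀ s g, Commute (conjComm t a μ ν s) g) (s : ℤ) :
    commElt (t ^ (-s) * a ^ μ * t ^ s) (t * a ^ ν * t⁻¹) = conjComm t a μ ν (s + 1) := by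
  have h := map_commElt (MulAut.conj t).toMonoidHom (t ^ (-(s + 1)) * a ^ μ * t ^ (s + 1)) (a ^ ν)
  simp only [MulEquiv.coe_toMonoidHom, MulAut.conj_apply] at h
  rw [← conjComm, (hc _ t).symm.eq, mul_inv_cancel_right] at h
  rw [h]
  congr 1
  group

lemma conjComm_powRecurrence_mu (hrel : t⁻¹ * a ^ (μ * ν * m') * t = a ^ (μ * ν * n'))
    (hc : ∀ s g, Commute (conjComm t a μ ν s) g) :
    PowRecurrence (conjComm t a μ ν) (μ * m') (μ * n') := fun s => by
  have ha : (a ^ ν) ^ (μ * m') = (t * a ^ ν * t⁻¹) ^ (μ * n') := by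
    rw [conj_zpow, ← zpow_mul, ← zpow_mul, show ν * (μ * n') = μ * ν * n' by ring, ← hrel]
    group
  have hc' : ∀ g, Commute (commElt (t ^ (-s) * a ^ μ * t ^ s) (t * a ^ ν * t⁻¹)) g := by
    rw [commElt_conj_eq_conjComm hc]; exact hc _
  rw [conjComm, ← commElt_zpow_right (hc s), ha, commElt_zpow_right hc',
    commElt_conj_eq_conjComm hc]

lemma conjComm_powRecurrence_nu (hrel : t⁻¹ * a ^ (μ * ν * m') * t = a ^ (μ * ν * n'))
    (hc : ∀ s g, Commute (conjComm t a μ ν s) g) :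
    PowRecurrence (conjComm t a μ ν) (ν * n') (ν * m') := fun s => by
  have hx : (t ^ (-(s + 1)) * a ^ μ * t ^ (s + 1)) ^ (ν * m')
      = (t ^ (-s) * a ^ μ * t ^ s) ^ (ν * n') := by
    rw [conj_zpow_zpow, conj_zpow_zpow, ← zpow_mul, ← zpow_mul,
      show μ * (ν * n') = μ * ν * n' by ring, ← hrel]
    group
  rw [conjComm, conjComm, ← commElt_zpow_left (hc s), ← commElt_zpow_left (hc (s + 1)), hx]

end

lemma conjComm_mem_of_forall_commutator_mem {K : Type*} [Group K] {t a : K} {μ ν m' n' : ℤ}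
    (hμ : μ ≠ 0) (hν : ν ≠ 0) (hμν : IsCoprime μ ν) (hmn : IsCoprime m' n')
    (hrel : t⁻¹ * a ^ (μ * ν * m') * t = a ^ (μ * ν * n')) (H : Subgroup K) [H.Normal]
    (hH : ∀ s g, ⁅conjComm t a μ ν s, g⁆ ∈ H) (s : ℤ) : conjComm t a μ ν s ∈ H := by
  set π := QuotientGroup.mk' H
  have hπ : ∀ s, π (conjComm t a μ ν s) = conjComm (π t) (π a) μ ν s := fun s => by
    simp only [conjComm, map_commElt, map_mul, map_zpow]
  have hrel' : (π t)⁻¹ * π a ^ (μ * ν * m') * π t = π a ^ (μ * ν * n') := by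
    simp only [← map_inv, ← map_zpow, ← map_mul, hrel]
  have hc : ∀ s g, Commute (conjComm (π t) (π a) μ ν s) g := fun s g => by
    obtain ⟨g, rfl⟩ := QuotientGroup.mk'_surjective H g
    rw [← hπ, ← commutatorElement_eq_one_iff_commute, ← map_commutatorElement,
      QuotientGroup.mk'_apply, QuotientGroup.eq_one_iff]
    exact hH s g
  rw [← QuotientGroup.eq_one_iff, ← QuotientGroup.mk'_apply, hπ]
  exact forall_eq_one_of_powRecurrence hμ hν hμν hmn
    (conjComm_powRecurrence_mu hrel' hc) (conjComm_powRecurrence_nu hrel' hc)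
    (conjComm_zero _ _ _ _) s

lemma subset_commutator_lcsOmega {G : Type*} [Group G] {S : Set G}
    (hS : ∀ H : Subgroup G, H.Normal → (∀ x ∈ S, ∀ g, ⁅x, g⁆ ∈ H) → S ⊆ H) :
    S ⊆ (⁅lcsOmega G, ⊤⁆ : Subgroup G) := by
  have hlcs : ∀ c, S ⊆ (⊤ : Subgroup G).lowerCentralSeries c := by
    intro c
    induction c with
    | zero => exact fun x _ => Subgroup.mem_top x
    | succ c ih => exact hS _ inferInstance fun x hx g =>
        Subgroup.commutator_mem_commutator (ih hx) (Subgroup.mem_top g)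
  have hω : S ⊆ lcsOmega G := fun x hx => Subgroup.mem_iInf.2 fun c => hlcs c hx
  have : (lcsOmega G).Normal := Subgroup.normal_iInf_normal fun c => inferInstance
  exact hS _ inferInstance fun x hx g =>
    Subgroup.commutator_mem_commutator (hω hx) (Subgroup.mem_top g)

lemma BS.relation (m n : ℤ) : (BS.t m n)⁻¹ * BS.a m n ^ m * BS.t m n = BS.a m n ^ n := by
  have h := PresentedGroup.mk_eq_mk_of_mul_inv_mem (rels := BSRels m n)
    (x := (FreeGroup.of 0)⁻¹ * FreeGroup.of 1 ^ m * FreeGroup.of 0) (y := FreeGroup.of 1 ^ n) rfl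
  simp only [map_mul, map_inv, map_zpow] at h
  exact h

theorem stmt18_general (m n : ℤ) (hm : 0 < m) (d : ℕ) (hd : (d : ℤ) = Int.gcd m n)
    (μ ν : ℕ) (hcop : Nat.gcd μ ν = 1) (hμν : μ * ν = d) (k : ℤ) :
    commElt ((BS.t m n) ^ (-k) * (BS.a m n) ^ (μ : ℤ) * (BS.t m n) ^ k) ((BS.a m n) ^ (ν : ℤ))
      ∈ ⁅lcsOmega (BS m n), (⊤ : Subgroup (BS m n))⁆ := by
  have hgcd : 0 < Int.gcd m n := Int.gcd_pos_of_ne_zero_left n hm.ne'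
  have hμν' : (μ : ℤ) * ν = Int.gcd m n := by rw [← hd]; exact_mod_cast hμν
  have hrel : (BS.t m n)⁻¹ * BS.a m n ^ ((μ : ℤ) * ν * (m / Int.gcd m n)) * BS.t m n
      = BS.a m n ^ ((μ : ℤ) * ν * (n / Int.gcd m n)) := by
    rw [hμν', Int.mul_ediv_cancel' (Int.gcd_dvd_left m n),
      Int.mul_ediv_cancel' (Int.gcd_dvd_right m n)]
    exact BS.relation m n
  have hμ : (μ : ℤ) ≠ 0 := left_ne_zero_of_mul (by rw [hμν']; exact_mod_cast hgcd.ne')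
  have hν : (ν : ℤ) ≠ 0 := right_ne_zero_of_mul (by rw [hμν']; exact_mod_cast hgcd.ne')
  refine subset_commutator_lcsOmega (S := Set.range (conjComm (BS.t m n) (BS.a m n) μ ν))
    (fun H _ hH => ?_) ⟨k, rfl⟩
  rintro _ ⟨s, rfl⟩
  exact conjComm_mem_of_forall_commutator_mem hμ hν (Nat.isCoprime_iff_coprime.2 hcop)
    (Int.isCoprime_iff_gcd_eq_one.2 (Int.gcd_div_gcd_div_gcd hgcd)) hrel H
    (fun s g => hH _ ⟨s, rfl⟩ g) s

theorem stmt18 (m n : ℤ) (hm : 0 < m) (hmn : m ≤ |n|) (d : ℕ) (hd : (d : ℤ) = Int.gcd m n)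
    (μ ν : ℕ) (hμ : 1 ≤ μ) (hν : 1 ≤ ν) (hμd : μ ≤ d) (hνd : ν ≤ d)
    (hcop : Nat.gcd μ ν = 1) (hμν : μ * ν = d) (k : ℤ) :
    commElt ((BS.t m n) ^ (-k) * (BS.a m n) ^ (μ : ℤ) * (BS.t m n) ^ k) ((BS.a m n) ^ (ν : ℤ))
      ∈ ⁅lcsOmega (BS m n), (⊤ : Subgroup (BS m n))⁆ :=
  stmt18_general m n hm d hd μ ν hcop hμν k
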